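/- For every k ≥ 2 and every normalized fully k-ary string s of length n, the flip grouping distance satisfies d_g(s) ≤ n − 2. -/

import Mathlib

/-!
A string with `b` blocks (maximal runs of one symbol) and at least two distinct symbols can be
grouped with at most `b - 2` flips; a normalized string of length `n` has `n` blocks.

Induct on `b`, and let the first block consist of `a`s. If `a` occurs again later, flipping the
prefix that ends just before the next block of `a`s merges the two blocks: one flip, one block
fewer. Otherwise reverse the whole string. The block of `a`s becomes a suffix that later flips
never touch and whose symbol occurs nowhere else, so it remains to group the other `b - 1`
blocks; if they all carry one symbol, the string was grouped to begin with.
-/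

/-- Prefix reversal (flip) of the first `i` symbols of `s`. -/
def pflip (i : ℕ) (s : List ℕ) : List ℕ := (s.take i).reverse ++ s.drop i

/-- One flip step: `t` is obtained from `s` by some flip `f^(i)` with `1 ≤ i ≤ |s|`. -/
def FlipStep (s t : List ℕ) : Prop := ∃ i, 1 ≤ i ∧ i ≤ s.length ∧ t = pflip i s

/-- `ReachIn m s t`: `t` can be obtained from `s` by exactly `m` flips. -/
def ReachIn : ℕ → List ℕ → List ℕ → Prop
  | 0 => fun s t => s = t
  | (m+1) => fun s t => ∃ u, FlipStep s u ∧ ReachIn m u t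

/-- Flip distance: minimum number of flips transforming `s` into `t`. -/
noncomputable def flipDist (s t : List ℕ) : ℕ := sInf {m | ReachIn m s t}

/-- Two strings are compatible if every symbol occurs equally often in both. -/
def Compatible (s t : List ℕ) : Prop := ∀ a, s.count a = t.count a

/-- A string is fully `k`-ary if the set of symbols occurring in it is exactly `{0,…,k-1}`. -/
def FullyKary (k : ℕ) (s : List ℕ) : Prop := ∀ a, a ∈ s ↔ a < k

/-- A string is normalized if no two adjacent symbols are equal. -/
def Normalized (s : List ℕ) : Prop := s.Chain' (· ≠ ·)

/-- A string is grouped if the occurrences of each symbol are consecutive. -/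
def Grouped (s : List ℕ) : Prop :=
  ∀ i j l : Fin s.length, i < j → j < l → s.get i = s.get l → s.get j = s.get i

/-- Flip grouping distance: minimum number of flips transforming `s` into some grouped string. -/
noncomputable def groupDist (s : List ℕ) : ℕ := sInf {m | ∃ t, Grouped t ∧ ReachIn m s t}

/-- Flip sorting distance: flip distance from `s` to its non-descending rearrangement `I(s)`. -/
noncomputable def sortDist (s : List ℕ) : ℕ := flipDist s (s.insertionSort (· ≤ ·))

/-- `rep w m` is the concatenation of `m` copies of the string `w`. -/
def rep (w : List ℕ) (m : ℕ) : List ℕ := (List.replicate m w).flatten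

section BlockCount

variable {α : Type*} [DecidableEq α]

def blockCount : List α → ℕ
  | [] => 0
  | [_] => 1
  | a :: b :: l => blockCount (b :: l) + if a = b then 0 else 1

@[simp]
theorem blockCount_nil : blockCount ([] : List α) = 0 := rfl

@[simp]
theorem blockCount_singleton (a : α) : blockCount [a] = 1 := rfl

@[simp]
theorem blockCount_cons_cons (a b : α) (l : List α) :
    blockCount (a :: b :: l) = blockCount (b :: l) + if a = b then 0 else 1 := rfl

theorem blockCount_cons (a : α) (l : List α) :
    blockCount (a :: l) = blockCount l + if l.head? = some a then 0 else 1 := by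
  cases l <;> simp [eq_comm]

theorem blockCount_pos {l : List α} (h : l ≠ []) : 0 < blockCount l := by
  match l with
  | [_] => simp
  | _ :: b :: l => have := blockCount_pos (List.cons_ne_nil b l); simp; omega

theorem blockCount_append_cons (u : List α) (x : α) (v : List α) :
    blockCount (u ++ x :: v) + 1 = blockCount (u ++ [x]) + blockCount (x :: v) := by
  induction u with
  | nil => simp; omega
  | cons y u ih =>
    cases u with
    | nil => simp; omega
    | cons z u => simp at ih ⊢; omega

theorem blockCount_reverse (l : List α) : blockCount l.reverse = blockCount l := by
  induction l with
  | nil => rfl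
  | cons a l ih =>
    cases l with
    | nil => rfl
    | cons b l =>
      have hsplit := blockCount_append_cons l.reverse b [a]
      simp only [List.reverse_cons, List.append_assoc, List.cons_append, List.nil_append] at ih ⊢
      simp only [blockCount_cons_cons, blockCount_singleton, ih] at hsplit ⊢
      split_ifs at hsplit ⊢ <;> grind

theorem blockCount_replicate_append (k : ℕ) (a : α) (l : List α) :
    blockCount (List.replicate (k + 1) a ++ l) = blockCount (a :: l) := by
  induction k with
  | zero => rfl
  | succ k ih => cases l <;> simp_all [List.replicate_succ]

theorem blockCount_eq_length {l : List α} (h : l.IsChain (· ≠ ·)) : blockCount l = l.length := by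
  match l, h with
  | [], _ => rfl
  | [_], _ => rfl
  | a :: b :: l, .cons_cons hab h => simp [blockCount_eq_length h, hab]

theorem two_le_blockCount_cons {l : List α} {a y : α} (hy : y ∈ l) (hya : y ≠ a) :
    2 ≤ blockCount (a :: l) := by
  induction l with
  | nil => simp at hy
  | cons b l ih =>
    rw [blockCount_cons_cons]
    by_cases hab : a = b
    · subst hab
      simpa using ih ((List.mem_cons.1 hy).resolve_left hya)
    · have := blockCount_pos (List.cons_ne_nil b l)
      simp only [hab, if_false]
      omega

theorem two_le_blockCount {l : List α} {x y : α} (hx : x ∈ l) (hy : y ∈ l) (hxy : x ≠ y) :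
    2 ≤ blockCount l := by
  obtain ⟨a, l, rfl⟩ := List.exists_cons_of_ne_nil (List.ne_nil_of_mem hx)
  by_cases hxa : x = a
  · subst hxa
    exact two_le_blockCount_cons ((List.mem_cons.1 hy).resolve_left hxy.symm) hxy.symm
  · exact two_le_blockCount_cons ((List.mem_cons.1 hx).resolve_left hxa) hxa

/-- Reversing a prefix that starts a block of `a`s and ends outside it glues that block onto the
next block of `a`s. -/
theorem blockCount_reverse_append_cons {u : List α} {a : α} (v : List α)
    (hhead : u.head? = some a) (hlast : u.getLast? ≠ some a) :
    blockCount (u.reverse ++ a :: v) + 1 = blockCount (u ++ a :: v) := by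
  have hsplit := blockCount_append_cons u a v
  have hsplit_rev := blockCount_append_cons u.reverse a v
  have hglue : blockCount (u.reverse ++ [a]) = blockCount u := by
    rw [← blockCount_reverse, List.reverse_append, List.reverse_reverse]
    simp [blockCount_cons, hhead]
  have hnew : blockCount (u ++ [a]) = blockCount u + 1 := by
    rw [← blockCount_reverse, List.reverse_append]
    simp [blockCount_cons, hlast, blockCount_reverse]
  omega

theorem exists_eq_replicate_append (a : α) (l : List α) :
    ∃ k r, l = List.replicate k a ++ r ∧ r.head? ≠ some a := by
  induction l with
  | nil => exact ⟨0, [], rfl, by simp⟩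
  | cons b l ih =>
    by_cases hba : b = a
    · obtain ⟨k, r, rfl, hr⟩ := ih
      exact ⟨k + 1, r, by simp [hba, List.replicate_succ], hr⟩
    · exact ⟨0, b :: l, rfl, by simpa using hba⟩

end BlockCount

theorem pflip_perm (i : ℕ) (s : List ℕ) : (pflip i s).Perm s :=
  ((List.reverse_perm _).append_right _).trans (by rw [List.take_append_drop])

theorem pflip_length_append (u v : List ℕ) : pflip u.length (u ++ v) = u.reverse ++ v := by
  simp [pflip]

theorem pflip_append {i : ℕ} {u : List ℕ} (h : i ≤ u.length) (v : List ℕ) :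
    pflip i (u ++ v) = pflip i u ++ v := by
  simp [pflip, List.take_append_of_le_length h, List.drop_append_of_le_length h]

theorem flipStep_append {u : List ℕ} (hu : u ≠ []) (v : List ℕ) :
    FlipStep (u ++ v) (u.reverse ++ v) :=
  ⟨u.length, List.length_pos_iff.2 hu, by simp, (pflip_length_append u v).symm⟩

theorem FlipStep.perm {s t : List ℕ} (h : FlipStep s t) : s.Perm t := by
  obtain ⟨i, -, -, rfl⟩ := h
  exact (pflip_perm i s).symm

theorem FlipStep.append_right {u v : List ℕ} (h : FlipStep u v) (w : List ℕ) :
    FlipStep (u ++ w) (v ++ w) := by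
  obtain ⟨i, hi, hiu, rfl⟩ := h
  exact ⟨i, hi, by simp; omega, (pflip_append hiu w).symm⟩

theorem ReachIn.perm {m : ℕ} {s t : List ℕ} (h : ReachIn m s t) : s.Perm t := by
  induction m generalizing s with
  | zero => exact .of_eq h
  | succ m ih =>
    obtain ⟨u, hsu, hut⟩ := h
    exact hsu.perm.trans (ih hut)

theorem ReachIn.append_right {m : ℕ} {u v : List ℕ} (h : ReachIn m u v) (w : List ℕ) :
    ReachIn m (u ++ w) (v ++ w) := by
  induction m generalizing u with
  | zero => exact congrArg (· ++ w) h
  | succ m ih =>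
    obtain ⟨u', huu', hu'v⟩ := h
    exact ⟨u' ++ w, huu'.append_right w, ih hu'v⟩

theorem grouped_replicate (k a : ℕ) : Grouped (List.replicate k a) := by
  intro i j l _ _ _
  simp

theorem Grouped.append_replicate {r : List ℕ} {c : ℕ} (hr : Grouped r) (hc : c ∉ r) (k : ℕ) :
    Grouped (r ++ List.replicate k c) := by
  intro i j l hij hjl heq
  rw [Fin.lt_def] at hij hjl
  simp only [List.get_eq_getElem, List.getElem_append, List.getElem_replicate] at heq ⊢
  split_ifs at heq ⊢
  all_goals first
    | rfl
    | omega
    | exact hr ⟨i, ‹_›⟩ ⟨j, ‹_›⟩ ⟨l, ‹_›⟩ hij hjl heq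
    | exact absurd (heq ▸ List.getElem_mem _) hc

theorem exists_flipStep_blockCount_succ {k a : ℕ} {r : List ℕ} (hr : r.head? ≠ some a)
    (har : a ∈ r) :
    ∃ t, FlipStep (List.replicate (k + 1) a ++ r) t ∧
      blockCount t + 1 = blockCount (List.replicate (k + 1) a ++ r) := by
  obtain ⟨X, Y, haX, rfl, -⟩ := List.exists_erase_eq har
  have hX : X ≠ [] := by rintro rfl; simp at hr
  set u := List.replicate (k + 1) a ++ X
  refine ⟨u.reverse ++ a :: Y, by simpa [u] using flipStep_append (u := u) (by simp [u]) (a :: Y), ?_⟩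
  have hlast : u.getLast? ≠ some a := by
    rw [List.getLast?_append_of_ne_nil _ hX]
    exact fun h => haX (List.mem_of_getLast? h)
  simpa [u] using blockCount_reverse_append_cons Y (by simp [u, List.replicate_succ]) hlast

theorem exists_reachIn_grouped {s : List ℕ} {x y : ℕ} (hx : x ∈ s) (hy : y ∈ s) (hxy : x ≠ y) :
    ∃ m, m + 2 ≤ blockCount s ∧ ∃ t, Grouped t ∧ ReachIn m s t := by
  induction hb : blockCount s using Nat.strong_induction_on generalizing s x y with
  | _ b ih =>
  obtain ⟨a, s, rfl⟩ := List.exists_cons_of_ne_nil (List.ne_nil_of_mem hx)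
  obtain ⟨k, r, hs, hr⟩ : ∃ k r, a :: s = List.replicate (k + 1) a ++ r ∧ r.head? ≠ some a := by
    obtain ⟨k, r, rfl, hr⟩ := exists_eq_replicate_append a s
    exact ⟨k, r, rfl, hr⟩
  rw [hs] at hx hy hb ⊢
  by_cases har : a ∈ r
  · obtain ⟨t, hst, hbt⟩ := exists_flipStep_blockCount_succ hr har
    obtain ⟨m, hm, u, hu, htu⟩ :=
      ih (blockCount t) (by omega) (hst.perm.subset hx) (hst.perm.subset hy) hxy rfl
    exact ⟨m + 1, by omega, u, hu, t, hst, htu⟩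
  by_cases hr_const : ∀ z ∈ r, ∀ w ∈ r, z = w
  · refine ⟨0, hb ▸ two_le_blockCount hx hy hxy, _, ?_, rfl⟩
    rcases r with _ | ⟨c, r⟩
    · simpa using grouped_replicate (k + 1) a
    · rw [List.eq_replicate_of_mem fun z hz => hr_const z hz c List.mem_cons_self]
      refine (grouped_replicate (k + 1) a).append_replicate ?_ _
      simpa [List.mem_replicate, eq_comm] using hr
  push Not at hr_const
  obtain ⟨z, hz, w, hw, hzw⟩ := hr_const
  have hbr : blockCount r + 1 = b := by
    rw [← hb, blockCount_replicate_append, blockCount_cons, if_neg hr]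
  obtain ⟨m, hm, u, hu, hru⟩ := ih (blockCount r.reverse) (by rw [blockCount_reverse]; omega)
    (List.mem_reverse.2 hz) (List.mem_reverse.2 hw) hzw rfl
  have hau : a ∉ u := fun hau => har (List.mem_reverse.1 (hru.perm.symm.subset hau))
  refine ⟨m + 1, by rw [blockCount_reverse] at hm; omega, u ++ List.replicate (k + 1) a,
    hu.append_replicate hau _, r.reverse ++ List.replicate (k + 1) a, ?_, hru.append_right _⟩
  simpa using flipStep_append (u := List.replicate (k + 1) a ++ r) (by simp) []

theorem grouping_upper_bound (k n : ℕ) (hk : 2 ≤ k) (s : List ℕ)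
    (hlen : s.length = n) (hfull : FullyKary k s) (hnorm : Normalized s) :
    groupDist s ≤ n - 2 := by
  obtain ⟨m, hm, t, ht, hst⟩ :=
    exists_reachIn_grouped ((hfull 0).2 (by omega)) ((hfull 1).2 (by omega)) zero_ne_one
  have hblocks : blockCount s = n := by rw [blockCount_eq_length hnorm, hlen]
  calc groupDist s ≤ m := Nat.sInf_le ⟨t, ht, hst⟩
    _ ≤ n - 2 := by omega
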